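/- For all z > 0, ψ'(z) > 1/z + 1/(2z²), where ψ is the digamma function. -/

import Mathlib

noncomputable def psi (z : ℝ) : ℝ := deriv (fun t => Real.log (Real.Gamma t)) z

/-!
Differentiating the Bohr–Mollerup limit `log Γ(x) = lim (x log n + log n! - ∑_{m ≤ n} log (x + m))`
term by term, locally uniformly, gives `ψ(x) = -γ - ∑ (1/(x+m) - 1/(m+1))` and then
`ψ'(x) = ∑ 1/(x+m)²`. With `t(w) = 1/w + 1/(2w²)` one has
`1/w² - (t(w) - t(w+1)) = 1/(2w²(w+1)²) > 0`, so the series strictly dominates the telescoping sum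
`∑ (t(x+m) - t(x+m+1)) = t(x)`.
-/

open Real Filter Topology Finset

local notation "γ" => eulerMascheroniConstant

theorem summable_one_div_add_sq (a : ℝ) : Summable fun m : ℕ => 1 / (a + m) ^ 2 := by
  refine ((Real.summable_one_div_nat_add_rpow a 2).mpr one_lt_two).congr fun m => ?_
  rw [Real.rpow_two, sq_abs, add_comm]

noncomputable def digammaTerm (m : ℕ) (x : ℝ) : ℝ := (x + m)⁻¹ - (m + 1 : ℝ)⁻¹

noncomputable def digammaSeries (x : ℝ) : ℝ := -γ - ∑' m, digammaTerm m x

theorem hasDerivAt_digammaTerm (m : ℕ) {x : ℝ} (hx : x + m ≠ 0) :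
    HasDerivAt (digammaTerm m) (-1 / (x + m) ^ 2) x :=
  (((hasDerivAt_id x).add_const (m : ℝ)).inv hx).sub_const (m + 1 : ℝ)⁻¹

theorem abs_digammaTerm_le {a x : ℝ} (ha : 0 < a) (ha₁ : a ≤ 1) (hax : a ≤ x) (m : ℕ) :
    |digammaTerm m x| ≤ |x - 1| / (a + m) ^ 2 := by
  have ham : 0 < a + m := by positivity
  have hxm : 0 < x + m := by linarith
  have hden : (a + m) ^ 2 ≤ (x + m) * (m + 1) := by
    rw [sq]; exact mul_le_mul (by linarith) (by linarith) ham.le hxm.le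
  have heq : digammaTerm m x = -(x - 1) / ((x + m) * (m + 1)) := by
    rw [digammaTerm]; field_simp; ring
  rw [heq, abs_div, abs_neg, abs_of_pos (mul_pos hxm (by positivity : (0 : ℝ) < m + 1))]
  gcongr

theorem summable_digammaTerm {x : ℝ} (hx : 0 < x) : Summable fun m => digammaTerm m x := by
  refine Summable.of_norm_bounded ((summable_one_div_add_sq (min x 1)).mul_left |x - 1|) fun m => ?_
  rw [Real.norm_eq_abs, mul_one_div]
  exact abs_digammaTerm_le (lt_min hx one_pos) (min_le_right _ _) (min_le_left _ _) m

theorem hasDerivAt_digammaSeries {x : ℝ} (hx : 0 < x) :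
    HasDerivAt digammaSeries (∑' m : ℕ, 1 / (x + m) ^ 2) x := by
  have hpos {y : ℝ} (hy : x / 2 < y) (m : ℕ) : 0 < y + m := by
    have : 0 < x / 2 := by positivity
    positivity [this.trans hy]
  have hseries := hasDerivAt_tsum_of_isPreconnected (summable_one_div_add_sq (x / 2)) isOpen_Ioi
    isPreconnected_Ioi (fun m y hy => hasDerivAt_digammaTerm m (hpos hy m).ne')
    (fun m y (hy : x / 2 < y) => ?_) (half_lt_self hx) (summable_digammaTerm hx)
    (half_lt_self hx)
  · have h := hseries.const_sub (-γ)
    simp only [neg_div, tsum_neg, neg_neg] at h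
    exact h
  · rw [norm_div, norm_neg, norm_one, Real.norm_eq_abs, abs_of_pos (pow_pos (hpos hy m) 2)]
    gcongr

theorem hasDerivAt_logGammaSeq (n : ℕ) {x : ℝ} (hx : 0 < x) :
    HasDerivAt (fun y => BohrMollerup.logGammaSeq y n)
      (log n - ∑ m ∈ range (n + 1), (x + m)⁻¹) x := by
  have hlog : HasDerivAt (fun y => ∑ m ∈ range (n + 1), log (y + m))
      (∑ m ∈ range (n + 1), (x + m)⁻¹) x :=
    HasDerivAt.fun_sum fun m _ => by
      simpa using ((hasDerivAt_id x).add_const (m : ℝ)).log (by positivity)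
  exact ((hasDerivAt_mul_const (log n)).add_const (log (Nat.factorial n))).sub hlog

theorem tendsto_log_sub_harmonic_succ :
    Tendsto (fun n : ℕ => log n - harmonic (n + 1)) atTop (𝓝 (-γ)) := by
  have h := (tendsto_harmonic_sub_log.comp (tendsto_add_atTop_nat 1)).add
    tendsto_log_nat_add_one_sub_log
  rw [add_zero] at h
  refine h.neg.congr fun n => ?_
  simp

theorem tendstoUniformlyOn_deriv_logGammaSeq {a b : ℝ} (ha : 0 < a) (ha₁ : a ≤ 1) :
    TendstoUniformlyOn (fun (n : ℕ) (x : ℝ) => log n - ∑ m ∈ range (n + 1), (x + m)⁻¹)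
      digammaSeries atTop (Set.Icc a b) := by
  have hsum := tendstoUniformlyOn_tsum_nat (f := digammaTerm) (s := Set.Icc a b)
    ((summable_one_div_add_sq a).mul_left (b + 1)) fun m x hx => ?_
  · have hsum' : TendstoUniformlyOn (fun n x => ∑ m ∈ range (n + 1), digammaTerm m x)
        (fun x => ∑' m, digammaTerm m x) atTop (Set.Icc a b) := fun u hu =>
      (tendsto_add_atTop_nat 1).eventually (hsum u hu)
    refine ((tendsto_log_sub_harmonic_succ.tendstoUniformlyOn_const _).sub hsum').congr ?_
    filter_upwards with n x hx
    simp [digammaTerm, harmonic, Finset.sum_sub_distrib]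
  · rw [Real.norm_eq_abs, mul_one_div]
    refine (abs_digammaTerm_le ha ha₁ hx.1 m).trans ?_
    gcongr
    rw [abs_le]
    constructor <;> linarith [hx.1, hx.2]

theorem hasDerivAt_log_Gamma {x : ℝ} (hx : 0 < x) :
    HasDerivAt (fun t => log (Gamma t)) (digammaSeries x) x := by
  obtain ⟨a, ha, ha₁, hax⟩ : ∃ a, 0 < a ∧ a ≤ 1 ∧ a < x :=
    ⟨min x 1 / 2, by positivity, by linarith [min_le_right x 1], by linarith [min_le_left x 1]⟩
  exact hasDerivAt_of_tendstoUniformlyOn isOpen_Ioo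
    ((tendstoUniformlyOn_deriv_logGammaSeq ha ha₁).mono Set.Ioo_subset_Icc_self)
    (Eventually.of_forall fun n y hy => hasDerivAt_logGammaSeq n (ha.trans hy.1))
    (fun y hy => BohrMollerup.tendsto_log_gamma (ha.trans hy.1))
    (⟨hax, lt_add_one x⟩ : x ∈ Set.Ioo a (x + 1))

theorem deriv_psi {x : ℝ} (hx : 0 < x) : deriv psi x = ∑' m : ℕ, 1 / (x + m) ^ 2 := by
  have hpsi : psi =ᶠ[𝓝 x] digammaSeries :=
    eventually_of_mem (isOpen_Ioi.mem_nhds hx) fun y hy => (hasDerivAt_log_Gamma hy).deriv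
  rw [hpsi.deriv_eq, (hasDerivAt_digammaSeries hx).deriv]

theorem Antitone.hasSum_sub_succ {f : ℕ → ℝ} (hf : Antitone f) (h0 : Tendsto f atTop (𝓝 0)) :
    HasSum (fun n => f n - f (n + 1)) (f 0) := by
  rw [hasSum_iff_tendsto_nat_of_nonneg fun n => sub_nonneg.mpr (hf n.le_succ)]
  simp_rw [Finset.sum_range_sub']
  simpa using tendsto_const_nhds.sub h0

theorem one_div_add_one_div_two_mul_sq_sub_succ_lt {w : ℝ} (hw : 0 < w) :
    1 / w + 1 / (2 * w ^ 2) - (1 / (w + 1) + 1 / (2 * (w + 1) ^ 2)) < 1 / w ^ 2 := by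
  have key : 1 / w ^ 2 - (1 / w + 1 / (2 * w ^ 2) - (1 / (w + 1) + 1 / (2 * (w + 1) ^ 2)))
      = 1 / (2 * w ^ 2 * (w + 1) ^ 2) := by
    field_simp
    ring
  have : 0 < 1 / (2 * w ^ 2 * (w + 1) ^ 2) := by positivity
  linarith

theorem one_div_add_one_div_two_mul_sq_lt_tsum {z : ℝ} (hz : 0 < z) :
    1 / z + 1 / (2 * z ^ 2) < ∑' m : ℕ, 1 / (z + m) ^ 2 := by
  set t : ℕ → ℝ := fun m => 1 / (z + m) + 1 / (2 * (z + m) ^ 2)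
  have ht_anti : Antitone t := fun i j hij => by
    have : (i : ℝ) ≤ j := by exact_mod_cast hij
    dsimp only [t]
    gcongr
  have ht_zero : Tendsto t atTop (𝓝 0) := by
    have hu : Tendsto (fun m : ℕ => z + m) atTop atTop :=
      tendsto_atTop_add_const_left _ _ tendsto_natCast_atTop_atTop
    have hu2 : Tendsto (fun m : ℕ => 2 * (z + m) ^ 2) atTop atTop :=
      ((tendsto_pow_atTop two_ne_zero).comp hu).const_mul_atTop two_pos
    simpa using (tendsto_const_nhds.div_atTop hu).add (tendsto_const_nhds.div_atTop hu2)
  have hlt (m : ℕ) : t m - t (m + 1) < 1 / (z + m) ^ 2 := by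
    have := one_div_add_one_div_two_mul_sq_sub_succ_lt (w := z + m) (by positivity)
    simpa [t, add_assoc] using this
  simpa [t] using hasSum_lt (fun m => (hlt m).le) (hlt 0) (ht_anti.hasSum_sub_succ ht_zero)
    (summable_one_div_add_sq z).hasSum

theorem stmt_3 (z : ℝ) (hz : 0 < z) :
    deriv psi z > 1 / z + 1 / (2 * z ^ 2) :=
  deriv_psi hz ▸ one_div_add_one_div_two_mul_sq_lt_tsum hz
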